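/- Let x ∈ gl₆(𝕂) be the matrix whose only nonzero entries are x₁₁ at position (1,1), x₂₃ at position (2,3), x₃₂ at position (3,2), and 1 at positions (4,5), (5,4), (6,6), where x₁₁, x₂₃, x₃₂ ∈ 𝕂 are nonzero and x₂₃ ≠ x₃₂. Then there exist unipotent elements g₁, g₂ ∈ S (i.e., gᵢ − I₆ is nilpotent) such that g₁·x·g₂^τ = x and χ_S(g₁)·χ_S(g₂) ≠ 1. -/

import Mathlib

open Matrix

/-- Assembles a `3 × 3` grid of `2 × 2` blocks into a `6 × 6` matrix. -/
def asm {𝕂 : Type*} [RCLike 𝕂] (m : Matrix (Fin 3) (Fin 3) (Matrix (Fin 2) (Fin 2) 𝕂)) :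
    Matrix (Fin 6) (Fin 6) 𝕂 :=
  Matrix.of fun i j =>
    m ⟨(i : ℕ) / 2, by have := i.2; omega⟩ ⟨(j : ℕ) / 2, by have := j.2; omega⟩
      ⟨(i : ℕ) % 2, by omega⟩ ⟨(j : ℕ) % 2, by omega⟩

/-- The subgroup `S ⊆ GL₆(𝕂)` of matrices of the block form `[[a,b,d],[0,a,c],[0,0,a]]`
with `a ∈ GL₂(𝕂)` and `b, c, d ∈ gl₂(𝕂)`. -/
def Sgrp (𝕂 : Type*) [RCLike 𝕂] : Set (Matrix (Fin 6) (Fin 6) 𝕂) :=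
  {s | ∃ a b c d : Matrix (Fin 2) (Fin 2) 𝕂, IsUnit a.det ∧
    s = asm !![a, b, d; 0, a, c; 0, 0, a]}

/-- The `2 × 2` block of a `6 × 6` matrix at block position `(k, l)`. -/
def blk {𝕂 : Type*} [RCLike 𝕂] (k l : Fin 3) (s : Matrix (Fin 6) (Fin 6) 𝕂) :
    Matrix (Fin 2) (Fin 2) 𝕂 :=
  Matrix.of fun i j =>
    s ⟨2 * (k : ℕ) + (i : ℕ), by have := k.2; have := i.2; omega⟩
      ⟨2 * (l : ℕ) + (j : ℕ), by have := l.2; have := j.2; omega⟩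

open Classical in
/-- The character `χ_S` of `S`, built from a character `χ` of `𝕂ˣ` and an additive
character `ψ` of `𝕂`:  on `s = [[a,b,d],[0,a,c],[0,0,a]]` its value is
`χ(det a)·ψ(tr((b+c)·a⁻¹))`. -/
noncomputable def chiS {𝕂 : Type*} [RCLike 𝕂] (χ : 𝕂ˣ →* ℂˣ) (ψ : 𝕂 → ℂ)
    (s : Matrix (Fin 6) (Fin 6) 𝕂) : ℂ :=
  if h : IsUnit (blk 0 0 s).det then
    (χ h.unit : ℂ) * ψ (Matrix.trace ((blk 0 1 s + blk 1 2 s) * (blk 0 0 s)⁻¹))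
  else 0

/-!
Take `g₁ = 1 + N₁` and `g₂ = 1 + N₂`, where each `Nᵢ` is a sum of three matrix units whose row
indices avoid their column indices, so `Nᵢ² = 0`. Then
`g₁ x g₂ᵀ = x + (N₁ x + x N₂ᵀ) + N₁ x N₂ᵀ`, and for the choice below the last term vanishes and
the middle one is a single matrix unit with coefficient `β x₃₂ + x₁₁ r`. The element `g₁` lies in
the unipotent radical of `S` and has `χ_S(g₁) = ψ(β - r)`, while `g₂` has diagonal block
`[[1,0],[r,1]]` and trivial off-diagonal blocks, so `χ_S(g₂) = ψ(0)` and, by additivity of `ψ`,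
`χ_S(g₁)·χ_S(g₂) = ψ(β - r)`. Given `t` with `ψ t ≠ 1`, the equations `β x₃₂ + x₁₁ r = 0`,
`β - r = t` are solvable as soon as `x₁₁ + x₃₂ ≠ 0`.
Otherwise `x₁₁ + x₂₃ ≠ 0` because `x₂₃ ≠ x₃₂`, and transposing exchanges `x₂₃` with `x₃₂`
as well as the roles of `g₁` and `g₂`.
-/

lemma one_add_mul_mul_one_add_transpose {n R : Type*} [Fintype n] [DecidableEq n] [Ring R]
    {N₁ N₂ x : Matrix n n R} (hlin : N₁ * x + x * N₂ᵀ = 0) (hquad : N₁ * x * N₂ᵀ = 0) :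
    (1 + N₁) * x * (1 + N₂)ᵀ = x := by
  calc (1 + N₁) * x * (1 + N₂)ᵀ = x + (N₁ * x + x * N₂ᵀ) + N₁ * x * N₂ᵀ := by
        rw [transpose_add, transpose_one]; noncomm_ring
    _ = x := by rw [hlin, hquad, add_zero, add_zero]

section MatrixUnits

variable {R : Type*} [Ring R]

def xMat (x11 x23 x32 : R) : Matrix (Fin 6) (Fin 6) R :=
  single 0 0 x11 + single 1 2 x23 + single 2 1 x32 + single 3 4 1 + single 4 3 1 + single 5 5 1

lemma xMat_transpose (x11 x23 x32 : R) : (xMat x11 x23 x32)ᵀ = xMat x11 x32 x23 := by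
  simp only [xMat, transpose_add, transpose_single]
  abel

def leftNil (x23 β r : R) : Matrix (Fin 6) (Fin 6) R :=
  single 0 2 β + single 1 4 (-(x23 * r)) + single 3 5 (-r)

def rightNil (r : R) : Matrix (Fin 6) (Fin 6) R :=
  single 1 0 r + single 3 2 r + single 5 4 r

lemma leftNil_mul_self (x23 β r : R) : leftNil x23 β r * leftNil x23 β r = 0 := by
  simp [leftNil, add_mul, mul_add]

lemma rightNil_mul_self (r : R) : rightNil r * rightNil r = 0 := by
  simp [rightNil, add_mul, mul_add]

lemma leftNil_mul_xMat_add_xMat_mul_rightNil_transpose (x11 x23 x32 β r : R)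
    (h : β * x32 + x11 * r = 0) :
    leftNil x23 β r * xMat x11 x23 x32 + xMat x11 x23 x32 * (rightNil r)ᵀ = 0 := by
  have hsingle : leftNil x23 β r * xMat x11 x23 x32 + xMat x11 x23 x32 * (rightNil r)ᵀ =
      single 0 1 (β * x32 + x11 * r) := by
    simp [leftNil, rightNil, xMat, add_mul, mul_add, single_add, ← single_neg]
    abel
  rw [hsingle, h, single_zero]

lemma leftNil_mul_xMat_mul_rightNil_transpose (x11 x23 x32 β r : R) :
    leftNil x23 β r * xMat x11 x23 x32 * (rightNil r)ᵀ = 0 := by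
  simp [leftNil, rightNil, xMat, add_mul, mul_add]

end MatrixUnits

section BlockForm

variable {𝕂 : Type*} [RCLike 𝕂]

lemma blk_asm (m : Matrix (Fin 3) (Fin 3) (Matrix (Fin 2) (Fin 2) 𝕂)) (k l : Fin 3) :
    blk k l (asm m) = m k l := by
  ext i j
  simp only [blk, asm, of_apply]
  congr <;> omega

lemma chiS_asm_of_det_eq_one (χ : 𝕂ˣ →* ℂˣ) (ψ : 𝕂 → ℂ) {a b c d : Matrix (Fin 2) (Fin 2) 𝕂}
    (ha : a.det = 1) :
    chiS χ ψ (asm !![a, b, d; 0, a, c; 0, 0, a]) = ψ (trace ((b + c) * a⁻¹)) := by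
  set s := asm !![a, b, d; 0, a, c; 0, 0, a]
  have h00 : blk 0 0 s = a := blk_asm _ 0 0
  have hunit : IsUnit (blk 0 0 s).det := by rw [h00, ha]; exact isUnit_one
  have hχ : χ hunit.unit = 1 := by
    rw [show hunit.unit = 1 from Units.ext (by rw [IsUnit.unit_spec, h00, ha, Units.val_one]),
      map_one]
  rw [chiS, dif_pos hunit, hχ, Units.val_one, one_mul, h00, blk_asm _ 0 1, blk_asm _ 1 2]
  rfl

lemma one_add_leftNil (x23 β r : 𝕂) :
    1 + leftNil x23 β r =
      asm !![1, !![β, 0; 0, 0], !![0, 0; -(x23 * r), 0]; 0, 1, !![0, 0; 0, -r]; 0, 0, 1] := by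
  ext i j
  fin_cases i <;> fin_cases j <;>
    simp only [leftNil, asm, of_apply, Matrix.add_apply, single_apply, one_apply, Fin.ext_iff] <;>
    norm_num

lemma one_add_rightNil (r : 𝕂) :
    1 + rightNil r = asm !![!![1, 0; r, 1], 0, 0; 0, !![1, 0; r, 1], 0; 0, 0, !![1, 0; r, 1]] := by
  ext i j
  fin_cases i <;> fin_cases j <;>
    simp only [rightNil, asm, of_apply, Matrix.add_apply, single_apply, one_apply, Fin.ext_iff] <;>
    norm_num

def IsUnipotentStabilizerValue (χ : 𝕂ˣ →* ℂˣ) (ψ : 𝕂 → ℂ) (x : Matrix (Fin 6) (Fin 6) 𝕂)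
    (z : ℂ) : Prop :=
  ∃ g₁ ∈ Sgrp 𝕂, ∃ g₂ ∈ Sgrp 𝕂, IsNilpotent (g₁ - 1) ∧ IsNilpotent (g₂ - 1) ∧
    g₁ * x * g₂ᵀ = x ∧ chiS χ ψ g₁ * chiS χ ψ g₂ = z

lemma IsUnipotentStabilizerValue.transpose {χ : 𝕂ˣ →* ℂˣ} {ψ : 𝕂 → ℂ}
    {x : Matrix (Fin 6) (Fin 6) 𝕂} {z : ℂ} (h : IsUnipotentStabilizerValue χ ψ x z) :
    IsUnipotentStabilizerValue χ ψ xᵀ z := by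
  obtain ⟨g₁, hg₁, g₂, hg₂, hn₁, hn₂, hfix, hz⟩ := h
  refine ⟨g₂, hg₂, g₁, hg₁, hn₂, hn₁, ?_, by rwa [mul_comm]⟩
  simpa [Matrix.mul_assoc] using congrArg Matrix.transpose hfix

lemma isUnipotentStabilizerValue_xMat {ψ : 𝕂 → ℂ} (hψ_add : ∀ s t, ψ (s + t) = ψ s * ψ t)
    (χ : 𝕂ˣ →* ℂˣ) {x11 x23 x32 : 𝕂} (hsum : x11 + x32 ≠ 0) (t : 𝕂) :
    IsUnipotentStabilizerValue χ ψ (xMat x11 x23 x32) (ψ t) := by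
  obtain ⟨r, β, hβ, ht⟩ : ∃ r β : 𝕂, β * x32 + x11 * r = 0 ∧ β - r = t :=
    ⟨-(t * x32 / (x11 + x32)), x11 * t / (x11 + x32), by field_simp; ring, by field_simp; ring⟩
  have hA : (!![1, 0; r, 1] : Matrix (Fin 2) (Fin 2) 𝕂).det = 1 := by simp [det_fin_two_of]
  refine ⟨1 + leftNil x23 β r, ⟨_, _, _, _, by simp, one_add_leftNil x23 β r⟩,
    1 + rightNil r, ⟨_, _, _, _, by rw [hA]; exact isUnit_one, one_add_rightNil r⟩,
    ⟨2, by rw [add_sub_cancel_left, sq, leftNil_mul_self]⟩,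
    ⟨2, by rw [add_sub_cancel_left, sq, rightNil_mul_self]⟩,
    one_add_mul_mul_one_add_transpose
      (leftNil_mul_xMat_add_xMat_mul_rightNil_transpose _ _ _ _ _ hβ)
      (leftNil_mul_xMat_mul_rightNil_transpose _ _ _ _ _), ?_⟩
  rw [one_add_leftNil, one_add_rightNil, chiS_asm_of_det_eq_one χ ψ det_one,
    chiS_asm_of_det_eq_one χ ψ hA, ← hψ_add, ← ht]
  simp [trace_fin_two, sub_eq_add_neg]

end BlockForm

theorem z64_unipotent_incompatibility_general {𝕂 : Type*} [RCLike 𝕂]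
    (ψ : 𝕂 → ℂ) (hψ_add : ∀ s t, ψ (s + t) = ψ s * ψ t)
    (hψ_nontriv : ∃ t, ψ t ≠ 1)
    (χ : 𝕂ˣ →* ℂˣ)
    (x11 x23 x32 : 𝕂)
    (hne : x23 ≠ x32)
    (x : Matrix (Fin 6) (Fin 6) 𝕂)
    (hx : x = x11 • Matrix.single 0 0 (1 : 𝕂) + x23 • Matrix.single 1 2 (1 : 𝕂)
      + x32 • Matrix.single 2 1 (1 : 𝕂) + Matrix.single 3 4 (1 : 𝕂)
      + Matrix.single 4 3 (1 : 𝕂) + Matrix.single 5 5 (1 : 𝕂)) :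
    ∃ g₁ ∈ Sgrp 𝕂, ∃ g₂ ∈ Sgrp 𝕂, IsNilpotent (g₁ - 1) ∧ IsNilpotent (g₂ - 1) ∧
      g₁ * x * g₂ᵀ = x ∧ chiS χ ψ g₁ * chiS χ ψ g₂ ≠ 1 := by
  obtain ⟨t, ht⟩ := hψ_nontriv
  suffices h : IsUnipotentStabilizerValue χ ψ x (ψ t) by
    obtain ⟨g₁, hg₁, g₂, hg₂, hn₁, hn₂, hfix, hz⟩ := h
    exact ⟨g₁, hg₁, g₂, hg₂, hn₁, hn₂, hfix, hz ▸ ht⟩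
  have hx' : x = xMat x11 x23 x32 := by simp [hx, xMat]
  rcases ne_or_eq (x11 + x32) 0 with hs | hs
  · exact hx' ▸ isUnipotentStabilizerValue_xMat hψ_add χ hs t
  · have hs' : x11 + x23 ≠ 0 := fun h => hne (by linear_combination h - hs)
    simpa [hx', xMat_transpose] using
      (isUnipotentStabilizerValue_xMat hψ_add χ hs' t).transpose

/-- Let `x` be the `6 × 6` matrix with (1-indexed) nonzero entries `x₁₁`, `x₂₃`, `x₃₂`
and `1` at positions `(4,5)`, `(5,4)`, `(6,6)`.  If `x₂₃ ≠ x₃₂`, then there are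
unipotent `g₁, g₂ ∈ S` with `g₁·x·g₂^τ = x` and `χ_S(g₁)·χ_S(g₂) ≠ 1`. -/
theorem z64_unipotent_incompatibility {𝕂 : Type*} [RCLike 𝕂]
    (ψ : 𝕂 → ℂ) (hψ_add : ∀ s t, ψ (s + t) = ψ s * ψ t) (hψ_unitary : ∀ t, ‖ψ t‖ = 1)
    (hψ_cont : Continuous ψ) (hψ_nontriv : ∃ t, ψ t ≠ 1)
    (χ : 𝕂ˣ →* ℂˣ)
    (x11 x23 x32 : 𝕂) (h11 : x11 ≠ 0) (h23 : x23 ≠ 0) (h32 : x32 ≠ 0)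
    (hne : x23 ≠ x32)
    (x : Matrix (Fin 6) (Fin 6) 𝕂)
    (hx : x = x11 • Matrix.single 0 0 (1 : 𝕂) + x23 • Matrix.single 1 2 (1 : 𝕂)
      + x32 • Matrix.single 2 1 (1 : 𝕂) + Matrix.single 3 4 (1 : 𝕂)
      + Matrix.single 4 3 (1 : 𝕂) + Matrix.single 5 5 (1 : 𝕂)) :
    ∃ g₁ ∈ Sgrp 𝕂, ∃ g₂ ∈ Sgrp 𝕂, IsNilpotent (g₁ - 1) ∧ IsNilpotent (g₂ - 1) ∧
      g₁ * x * g₂ᵀ = x ∧ chiS χ ψ g₁ * chiS χ ψ g₂ ≠ 1 :=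
  z64_unipotent_incompatibility_general ψ hψ_add hψ_nontriv χ x11 x23 x32 hne x hx
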